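/- Let H = {z ∈ ℂ : Re z > 0} be the open right half-plane and A(cl(H)) the Fréchet space of continuous functions on cl(H) = {z : Re z ≥ 0} that are holomorphic on H, endowed with the topology of uniform convergence on compact subsets of cl(H). Then the set of f ∈ A(cl(H)) having infinite difference quotients at every point z₀ of the imaginary axis iℝ along iℝ is a dense Gδ subset of A(cl(H)). -/

import Mathlib

/-!
Fix a compact piece `K` of the imaginary axis and constants `M`, `δ`. The functions whose trace
on the axis has, at every point of `K`, a difference quotient larger than `M` against some point
within distance `δ` form an open set, and letting `K` exhaust the axis while `M → ∞`, `δ → 0`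
writes the set in question as a countable intersection of such sets.

Each of them is dense. Adding `ε • exp (-(π / c) z)` to `f` moves it by at most `ε` on the closed
half-plane and keeps it holomorphic inside; on the axis the added term is unimodular and changes
sign under every vertical step of length `c`, so the trace gets a jump of almost `2 ε` across
distance `c`, which beats `M c` once `c` is small compared with `ε / M` and with the modulus of
continuity of `f`.

Locally uniform limits of holomorphic functions are holomorphic, so `A` is closed in `C(E, ℂ)`,
hence completely metrizable, and Baire's theorem concludes.
-/

open scoped Classical in
/-- Extend a continuous map on `E` to all of `ℂ` by zero. -/
noncomputable def extendFn (E : Set ℂ) (f : C(E, ℂ)) : ℂ → ℂ :=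
  fun z => if h : z ∈ E then f ⟨z, h⟩ else 0

/-- `f` has infinite difference quotients at `z₀` along `J`. -/
def HasInfDiffQuot (f : ℂ → ℂ) (J : Set ℂ) (z₀ : ℂ) : Prop :=
  ∀ M > (0:ℝ), ∀ δ > (0:ℝ), ∃ z ∈ J,
    0 < ‖z - z₀‖ ∧ ‖z - z₀‖ < δ ∧
      M * ‖z - z₀‖ < ‖f z - f z₀‖

open Set Filter Topology Metric Complex Real

theorem le_dist_sub_add {E : Type*} [SeminormedAddCommGroup E] [NormedSpace ℝ E] (x x' y : E) :
    2 * ‖y‖ - dist x' x ≤ dist (x' - y) (x + y) :=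
  calc 2 * ‖y‖ - dist x' x = ‖(2 : ℝ) • y‖ - ‖x' - x‖ := by
        rw [norm_smul, Real.norm_two, dist_eq_norm]
    _ ≤ ‖(2 : ℝ) • y - (x' - x)‖ := norm_sub_norm_le _ _
    _ = dist (x' - y) (x + y) := by rw [dist_eq_norm, ← norm_neg]; congr 1; module

section DiffQuot

variable {α X : Type*} [PseudoMetricSpace α] [PseudoMetricSpace X]

def DiffQuotExceeds (ψ : α → X) (M δ : ℝ) (a : α) : Prop :=
  ∃ b, 0 < dist b a ∧ dist b a < δ ∧ M * dist b a < dist (ψ b) (ψ a)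

theorem DiffQuotExceeds.mono {ψ : α → X} {M M' δ δ' : ℝ} {a : α} (h : DiffQuotExceeds ψ M δ a)
    (hM : M' ≤ M) (hδ : δ ≤ δ') : DiffQuotExceeds ψ M' δ' a := by
  obtain ⟨b, hpos, hlt, hquot⟩ := h
  exact ⟨b, hpos, hlt.trans_le hδ, (mul_le_mul_of_nonneg_right hM hpos.le).trans_lt hquot⟩

theorem forall_diffQuotExceeds_iff_of_monotone {K : ℕ → Set α} (hK : Monotone K)
    (hcover : ∀ a, ∃ n, a ∈ K n) (ψ : α → X) :
    (∀ a, ∀ M > 0, ∀ δ > 0, DiffQuotExceeds ψ M δ a) ↔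
      ∀ n : ℕ, ∀ a ∈ K n, DiffQuotExceeds ψ (n + 1) (n + 1)⁻¹ a := by
  refine ⟨fun h n a _ ↦ h a _ (by positivity) _ (by positivity), fun h a M _ δ hδ ↦ ?_⟩
  obtain ⟨m, ha⟩ := hcover a
  obtain ⟨n, hn⟩ := exists_nat_ge (max (m : ℝ) (max M δ⁻¹))
  simp only [max_le_iff] at hn
  refine (h n a (hK (by exact_mod_cast hn.1) ha)).mono (by linarith) ?_
  exact inv_le_of_inv_le₀ hδ (by linarith)

theorem isOpen_setOf_forall_diffQuotExceeds [LocallyCompactSpace α] {K : Set α}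
    (hK : IsCompact K) (M δ : ℝ) :
    IsOpen {ψ : C(α, X) | ∀ a ∈ K, DiffQuotExceeds ψ M δ a} := by
  refine isOpen_iff_eventually.2 fun ψ₀ hψ₀ ↦ hK.eventually_forall_of_forall_eventually
    fun a ha ↦ ?_
  obtain ⟨b, hb⟩ := hψ₀ a ha
  have hopen : IsOpen {p : C(α, X) × α |
      0 < dist b p.2 ∧ dist b p.2 < δ ∧ M * dist b p.2 < dist (p.1 b) (p.1 p.2)} := by
    simp only [ofPred_and]
    refine (isOpen_lt ?_ ?_).inter ((isOpen_lt ?_ ?_).inter (isOpen_lt ?_ ?_)) <;> fun_prop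
  exact Eventually.mono (hopen.mem_nhds hb) fun p hp ↦ ⟨b, hp⟩

theorem IsCompact.exists_forall_dist_lt {K : Set α} (hK : IsCompact K) {f : α → X}
    (hf : Continuous f) {ε : ℝ} (hε : 0 < ε) :
    ∃ d > 0, ∀ a ∈ K, ∀ b, dist b a < d → dist (f b) (f a) < ε := by
  obtain ⟨d, hd, hdK⟩ := mem_uniformity_dist.1 <| hK.uniformContinuousAt_of_continuousAt f
    (fun a _ ↦ hf.continuousAt) (dist_mem_uniformity hε)
  exact ⟨d, hd, fun a ha b hb ↦ by simpa [dist_comm] using hdK (dist_comm a b ▸ hb) ha⟩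

theorem ContinuousMap.exists_forall_dist_lt_imp_mem {Y : Type*} [TopologicalSpace Y]
    {f : C(Y, X)} {U : Set C(Y, X)} (hU : U ∈ 𝓝 f) :
    ∃ r > 0, ∀ g : C(Y, X), (∀ y, dist (f y) (g y) < r) → g ∈ U := by
  rw [nhds_eq_comap_uniformity, (hasBasis_compactConvergenceUniformity.comap (Prod.mk f)).mem_iff]
    at hU
  obtain ⟨⟨K, u⟩, ⟨-, hu⟩, hsub⟩ := hU
  obtain ⟨r, hr, hru⟩ := mem_uniformity_dist.1 hu
  exact ⟨r, hr, fun g hg ↦ hsub fun y _ ↦ hru (hg y)⟩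

theorem DiffQuotExceeds.of_add_smul_antiperiodic {V : Type*} [SeminormedAddCommGroup V]
    [NormedSpace ℝ V] {ψ w : α → V} {M δ ε : ℝ} {a b : α} (hε : 0 ≤ ε) (hwa : ‖w a‖ = 1)
    (hwb : w b = -w a) (hba : 0 < dist b a) (hbδ : dist b a < δ)
    (hψ : dist (ψ b) (ψ a) < ε) (hM : M * dist b a < ε) :
    DiffQuotExceeds (ψ + ε • w) M δ a := by
  refine ⟨b, hba, hbδ, ?_⟩
  calc M * dist b a < 2 * ‖ε • w a‖ - dist (ψ b) (ψ a) := by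
        rw [norm_smul, hwa, mul_one, Real.norm_of_nonneg hε]
        linarith
    _ ≤ dist (ψ b - ε • w a) (ψ a + ε • w a) := le_dist_sub_add _ _ _
    _ = dist ((ψ + ε • w) b) ((ψ + ε • w) a) := by simp [hwb, sub_eq_add_neg]

end DiffQuot

theorem hasInfDiffQuot_iff {J : Set ℂ} {z₀ : ℂ} (hz₀ : z₀ ∈ J) (f : ℂ → ℂ) :
    HasInfDiffQuot f J z₀ ↔
      ∀ M > 0, ∀ δ > 0, DiffQuotExceeds (J.domRestrict f) M δ ⟨z₀, hz₀⟩ := by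
  simp only [HasInfDiffQuot, DiffQuotExceeds, Subtype.exists, Subtype.dist_eq, dist_eq_norm,
    domRestrict_apply, exists_prop]

theorem extendFn_of_mem {E : Set ℂ} (f : C(E, ℂ)) {z : ℂ} (hz : z ∈ E) :
    extendFn E f z = f ⟨z, hz⟩ :=
  dif_pos hz

def ContinuousMap.restrictSubset {Y Z : Type*} [TopologicalSpace Y] [TopologicalSpace Z]
    {J E : Set Y} (h : J ⊆ E) (f : C(E, Z)) : C(J, Z) :=
  f.comp ⟨inclusion h, continuous_inclusion h⟩

theorem restrict_extendFn {J E : Set ℂ} (h : J ⊆ E) (f : C(E, ℂ)) :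
    J.domRestrict (extendFn E f) = f.restrictSubset h :=
  funext fun z ↦ extendFn_of_mem f (h z.2)

theorem isClosed_setOf_differentiableOn_extendFn {E U : Set ℂ} (hU : IsOpen U) (hUE : U ⊆ E) :
    IsClosed {f : C(E, ℂ) | DifferentiableOn ℂ (extendFn E f) U} := by
  refine isClosed_iff_clusterPt.2 fun f hf ↦ ?_
  set l := 𝓝 f ⊓ 𝓟 {f : C(E, ℂ) | DifferentiableOn ℂ (extendFn E f) U}
  have hl : Tendsto id l (𝓝 f) := tendsto_id.mono_left inf_le_left
  rw [ContinuousMap.tendsto_iff_forall_isCompact_tendstoUniformlyOn] at hl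
  have hloc : TendstoLocallyUniformlyOn (fun g : C(E, ℂ) ↦ extendFn E g) (extendFn E f) l U := by
    refine (tendstoLocallyUniformlyOn_iff_forall_isCompact hU).2 fun K hKU hK ↦ ?_
    have hK' : IsCompact ((↑) ⁻¹' K : Set E) := by
      rwa [Subtype.isCompact_iff, image_preimage_eq_of_subset (by simpa using hKU.trans hUE)]
    intro u hu
    filter_upwards [hl _ hK' u hu] with g hg z hz
    simpa only [extendFn_of_mem _ (hUE (hKU hz)), id] using hg ⟨z, hUE (hKU hz)⟩ hz
  have : l.NeBot := hf
  exact hloc.differentiableOn (eventually_inf_principal.2 (.of_forall fun _ ↦ id)) hU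

theorem differentiableOn_extendFn_add_restrict {E U : Set ℂ} (hUE : U ⊆ E) {f : C(E, ℂ)}
    (hf : DifferentiableOn ℂ (extendFn E f) U) {h : C(ℂ, ℂ)} (hh : Differentiable ℂ h) :
    DifferentiableOn ℂ (extendFn E (f + h.restrict E)) U :=
  (hf.add hh.differentiableOn).congr fun z hz ↦ by
    simp [extendFn_of_mem _ (hUE hz)]

theorem norm_cexp_neg_ofReal_mul (t : ℝ) (z : ℂ) :
    ‖cexp (-(t : ℂ) * z)‖ = rexp (-(t * z.re)) := by
  rw [Complex.norm_exp, neg_mul, neg_re, re_ofReal_mul]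

theorem antiperiodic_cexp_neg_mul {c : ℝ} (hc : c ≠ 0) :
    Function.Antiperiodic (fun z ↦ cexp (-((π / c : ℝ) : ℂ) * z)) (c * I) := fun z ↦ by
  have : -((π / c : ℝ) : ℂ) * (z + c * I) = -((π / c : ℝ) : ℂ) * z + -(π * I) := by
    push_cast
    field_simp [ofReal_ne_zero.2 hc]
    ring
  simp only [this, Complex.exp_add, Complex.exp_neg, exp_pi_mul_I]
  ring

theorem axis_subset_closedRightHalfPlane : {z : ℂ | z.re = 0} ⊆ {z : ℂ | 0 ≤ z.re} :=
  fun _ hz ↦ hz.ge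

theorem openRightHalfPlane_subset_closedRightHalfPlane :
    {z : ℂ | 0 < z.re} ⊆ {z : ℂ | 0 ≤ z.re} :=
  ofPred_subset_ofPred.2 fun _ ↦ le_of_lt

theorem mem_closure_differentiableOn_inter_diffQuotExceeds {K : Set {z : ℂ | z.re = 0}}
    (hK : IsCompact K) {M δ : ℝ} (hM : 0 < M) (hδ : 0 < δ) {f : C({z : ℂ | 0 ≤ z.re}, ℂ)}
    (hf : DifferentiableOn ℂ (extendFn _ f) {z | 0 < z.re}) :
    f ∈ closure ({g | DifferentiableOn ℂ (extendFn _ g) {z | 0 < z.re}} ∩ {g | ∀ a ∈ K,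
      DiffQuotExceeds (g.restrictSubset axis_subset_closedRightHalfPlane) M δ a}) := by
  refine mem_closure_iff_nhds.2 fun U hU ↦ ?_
  obtain ⟨r, hr, hrU⟩ := ContinuousMap.exists_forall_dist_lt_imp_mem hU
  set ε := r / 2
  have hε : 0 < ε := half_pos hr
  set ψ := f.restrictSubset axis_subset_closedRightHalfPlane
  obtain ⟨d, hd, hψ⟩ := hK.exists_forall_dist_lt ψ.continuous hε
  obtain ⟨c, hc, hcd, hcδ, hcM⟩ : ∃ c > 0, c < d ∧ c < δ ∧ M * c < ε := by
    set m := min d (min δ (ε / M))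
    have hmM : M * m ≤ ε := (le_div_iff₀' hM).1 ((min_le_right _ _).trans (min_le_right _ _))
    have hm : 0 < m := by positivity
    refine ⟨m / 2, half_pos hm, ?_, ?_, by nlinarith⟩
    · linarith [min_le_left d (min δ (ε / M))]
    · linarith [min_le_left δ (ε / M), min_le_right d (min δ (ε / M))]
  let w : C(ℂ, ℂ) := ⟨fun z ↦ cexp (-((π / c : ℝ) : ℂ) * z), by fun_prop⟩
  have hw : ∀ z : ℂ, ‖w z‖ = rexp (-(π / c * z.re)) := norm_cexp_neg_ofReal_mul _
  let g := f + (ε • w).restrict {z : ℂ | 0 ≤ z.re}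
  have hεw : Differentiable ℂ (ε • w) := by
    change Differentiable ℂ fun z ↦ ε • cexp (-((π / c : ℝ) : ℂ) * z)
    fun_prop
  refine ⟨g, hrU g fun z ↦ ?_, differentiableOn_extendFn_add_restrict
    openRightHalfPlane_subset_closedRightHalfPlane hf hεw, fun a ha ↦ ?_⟩
  · have : ‖w z‖ ≤ 1 := by
      rw [hw, Real.exp_le_one_iff, neg_nonpos]
      exact mul_nonneg (by positivity) z.2
    calc dist (f z) (g z) = ε * ‖w z‖ := by
          simp only [g, ContinuousMap.add_apply, ContinuousMap.restrict_apply,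
            ContinuousMap.smul_apply, dist_self_add_right, norm_smul, Real.norm_of_nonneg hε.le]
      _ ≤ ε := mul_le_of_le_one_right hε.le this
      _ < r := half_lt_self hr
  let b : {z : ℂ | z.re = 0} := ⟨a + c * I, by simp [show (a : ℂ).re = 0 from a.2]⟩
  have hba : dist b a = c := by
    rw [Subtype.dist_eq, dist_eq_norm, add_sub_cancel_left, norm_mul, norm_I, mul_one, norm_real,
      Real.norm_of_nonneg hc.le]
  have hwa : ‖w a‖ = 1 := by rw [hw, a.2, mul_zero, neg_zero, Real.exp_zero]
  exact DiffQuotExceeds.of_add_smul_antiperiodic (w := fun z : {z : ℂ | z.re = 0} ↦ w z) hε.le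
    hwa (antiperiodic_cexp_neg_mul hc.ne' a) (hba ▸ hc) (hba ▸ hcδ) (hψ a ha b (hba ▸ hcd))
    (hba ▸ hcM)

/-- In the Fréchet space `A(cl H)` of continuous functions on the closed right half-plane
`{Re z ≥ 0}` that are holomorphic on the open right half-plane `{Re z > 0}`, endowed with the
topology of uniform convergence on compact subsets (the compact-open topology), the set of
functions having infinite difference quotients at every point of the imaginary axis along the
imaginary axis is a dense `Gδ` set. -/
theorem halfPlane_genericity :
    let E : Set ℂ := {z | 0 ≤ z.re}
    let A : Set C(E, ℂ) := {f | DifferentiableOn ℂ (extendFn E f) {z | 0 < z.re}}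
    let S : Set ↥A := {f | ∀ z₀ ∈ {z : ℂ | z.re = 0},
      HasInfDiffQuot (extendFn E f.1) {z : ℂ | z.re = 0} z₀}
    Dense S ∧ IsGδ S := by
  intro E A S
  set J := {z : ℂ | z.re = 0}
  have hE : IsClosed E := isClosed_le continuous_const continuous_re
  have hJ : IsClosed J := isClosed_eq continuous_re continuous_const
  have := hE.locallyCompactSpace
  have := hE.sigmaCompactSpace
  have := hJ.locallyCompactSpace
  let T (n : ℕ) : Set C(E, ℂ) := {g | ∀ a ∈ compactCovering J n,
    DiffQuotExceeds (g.restrictSubset axis_subset_closedRightHalfPlane) (n + 1) (n + 1)⁻¹ a}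
  have hS : S = ⋂ n, (↑) ⁻¹' T n := by
    ext f
    simp only [S, T, mem_ofPred_eq, mem_iInter, mem_preimage]
    rw [← forall_diffQuotExceeds_iff_of_monotone (fun _ _ ↦ (compactCovering_subset J ·))
      exists_mem_compactCovering, ← restrict_extendFn, Subtype.forall]
    exact forall₂_congr fun z hz ↦ hasInfDiffQuot_iff hz _
  have hopen (n : ℕ) : IsOpen ((↑) ⁻¹' T n : Set A) :=
    ((isOpen_setOf_forall_diffQuotExceeds (isCompact_compactCovering J n) _ _).preimage
      (ContinuousMap.continuous_precomp _)).preimage continuous_subtype_val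
  have hdense (n : ℕ) : Dense ((↑) ⁻¹' T n : Set A) := by
    rw [Subtype.dense_iff, image_preimage_eq_inter_range, Subtype.range_coe, inter_comm]
    exact fun f hf ↦ mem_closure_differentiableOn_inter_diffQuotExceeds
      (isCompact_compactCovering J n) (by positivity) (by positivity) hf
  have : TopologicalSpace.IsCompletelyPseudoMetrizableSpace A :=
    (isClosed_setOf_differentiableOn_extendFn (isOpen_lt continuous_const continuous_re)
      openRightHalfPlane_subset_closedRightHalfPlane).isCompletelyPseudoMetrizableSpace
  rw [hS]
  exact ⟨dense_iInter_of_isOpen hopen hdense, .iInter fun n ↦ (hopen n).isGδ⟩
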